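/- arXiv:2510.01852 — 5 statements merged into one kernel-verified Lean document; each statement's English description precedes it below -/
import Mathlib

section
/- If G is a finite digraph containing an in-out cycle (a cycle in which some vertex has in-degree greater than 1 and some vertex has out-degree greater than 1), then the set of paths of G is not well quasi-ordered under the subpath order; in particular, there exists an infinite antichain of paths. -/
/-!
Unwinding the cycle gives an `L`-periodic walk `Q` with `Q 0 = u` and `Q b = w`. Choose an
in-neighbour `x` of `u` other than its cycle predecessor `Q (L - 1)` and an out-neighbour `y` of
`w` other than its cycle successor `Q (b + 1)`. The paths `x → Q 0 → ⋯ → Q (b + kL) → y`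
(`k ≥ 1`) form an antichain. If the shorter one sat inside the longer one at offset `0`, its
last vertex would give `y = Q (b + 1)`; at an offset `T > 0`, its first vertex would give
`x = Q (T - 1)` and its middle part, which covers a full period, `Q (T - 1 + L) = Q (L - 1)`,
so `x = Q (L - 1)` by periodicity.
-/

open Function

theorem List.IsInfix.exists_offset_map_range {α : Type*} {f g : ℕ → α} {m n : ℕ}
    (h : (range m).map f <:+: (range n).map g) :
    ∃ T, m + T ≤ n ∧ ∀ i < m, g (i + T) = f i := by
  obtain ⟨T, hle, hT⟩ := infix_iff_getElem?.mp h
  refine ⟨T, by simpa using hle, fun i hi => ?_⟩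
  have := hT i (by simpa using hi)
  rwa [getElem?_map, getElem?_range (by simp at hle; omega), Option.map_some, Option.some_inj,
    getElem_map, getElem_range] at this

theorem List.isChain_map_range_succ {α : Type*} (R : α → α → Prop) (f : ℕ → α) (n : ℕ) :
    ((range (n + 1)).map f).IsChain R ↔ ∀ i < n, R (f i) (f (i + 1)) := by
  rw [isChain_map, isChain_range_succ]

section ClosedWalk

variable {V : Type*} {E : V → V → Prop} {l : List V}

theorem List.IsChain.exists_periodic_walk (hchain : l.IsChain E) (hlen : 2 ≤ l.length)
    (hcyc : l.head? = l.getLast?) :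
    ∃ L, 0 < L ∧ ∃ Q : ℕ → V, Periodic Q L ∧ (∀ i, E (Q i) (Q (i + 1))) ∧
      ∀ v ∈ l, ∃ i, Q i = v := by
  obtain ⟨L, hL⟩ : ∃ L, l.length = L + 1 := ⟨l.length - 1, by omega⟩
  have hL0 : 0 < L := by omega
  have hclosed : l[L] = l[0] := by
    rw [List.head?_eq_getElem?, List.getLast?_eq_getElem?, hL, Nat.add_sub_cancel,
      List.getElem?_eq_getElem (by omega), List.getElem?_eq_getElem (by omega)] at hcyc
    exact (Option.some_inj.mp hcyc).symm
  have hedge : ∀ r (h : r < L), E l[r] l[r + 1] :=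
    fun r h => List.isChain_iff_getElem.mp hchain r (by omega)
  let Q : ℕ → V := fun i => l[i % L]'((Nat.mod_lt i hL0).trans (by omega))
  have hsucc : ∀ i, Q (i + 1) = l[i % L + 1]'(by have := Nat.mod_lt i hL0; omega) := by
    intro i
    have hdecomp : i + 1 = (i % L + 1) + L * (i / L) := by have := Nat.mod_add_div i L; omega
    rcases Nat.lt_or_ge (i % L + 1) L with h | h
    · have : (i + 1) % L = i % L + 1 := by
        rw [hdecomp, Nat.add_mul_mod_self_left, Nat.mod_eq_of_lt h]
      simp only [Q, this]
    · have hlast : i % L + 1 = L := by have := Nat.mod_lt i hL0; omega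
      have : (i + 1) % L = 0 := by
        rw [hdecomp, hlast, Nat.add_mul_mod_self_left, Nat.mod_self]
      simp only [Q, this, hlast, hclosed]
  refine ⟨L, hL0, Q, fun i => by simp [Q], fun i => hsucc i ▸ hedge _ (Nat.mod_lt i hL0), ?_⟩
  intro v hv
  obtain ⟨a, ha, rfl⟩ := List.getElem_of_mem hv
  rcases Nat.lt_or_ge a L with h | h
  · exact ⟨a, by simp [Q, Nat.mod_eq_of_lt h]⟩
  · obtain rfl : a = L := by omega
    exact ⟨0, by simp [Q, hclosed]⟩

theorem List.IsChain.exists_periodic_walk_through (hchain : l.IsChain E) (hlen : 2 ≤ l.length)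
    (hcyc : l.head? = l.getLast?) {u w : V} (hu : u ∈ l) (hw : w ∈ l) :
    ∃ L, 0 < L ∧ ∃ Q : ℕ → V, Periodic Q L ∧ (∀ i, E (Q i) (Q (i + 1))) ∧
      Q 0 = u ∧ ∃ b, Q b = w := by
  obtain ⟨L, hL, Q, hQ, hwalk, hvisit⟩ := hchain.exists_periodic_walk hlen hcyc
  obtain ⟨a, rfl⟩ := hvisit u hu
  obtain ⟨a', rfl⟩ := hvisit w hw
  refine ⟨L, hL, fun i => Q (a + i), hQ.const_add a, fun i => hwalk (a + i), rfl,
    a' + a * L - a, ?_⟩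
  show Q (a + (a' + a * L - a)) = Q a'
  rw [show a + (a' + a * L - a) = a' + a * L by have := Nat.le_mul_of_pos_right a hL; omega]
  exact hQ.nat_mul a a'

end ClosedWalk

section Detour

variable {V : Type*} (Q : ℕ → V) (x y : V) (n : ℕ)

def detour (i : ℕ) : V :=
  if i = 0 then x else if i ≤ n + 1 then Q (i - 1) else y

def detourPath : List V :=
  (List.range (n + 3)).map (detour Q x y n)

variable {Q x y n}

theorem detourPath_ne_nil : detourPath Q x y n ≠ [] := by
  simp [detourPath]

theorem isChain_detourPath {E : V → V → Prop} (hx : E x (Q 0))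
    (hQ : ∀ i < n, E (Q i) (Q (i + 1))) (hy : E (Q n) y) :
    (detourPath Q x y n).IsChain E := by
  rw [detourPath, List.isChain_map_range_succ]
  intro i hi
  rcases i with _ | i
  · simpa [detour] using hx
  rcases Nat.lt_or_ge i n with hin | hni
  · simpa [detour, hin.le, hin] using hQ i hin
  · obtain rfl : i = n := by omega
    simpa [detour] using hy

theorem not_detourPath_infix {L m : ℕ} (hL : 0 < L) (hQ : Periodic Q L)
    (hxQ : x ≠ Q (L - 1)) (hyQ : y ≠ Q (m + 1)) (hLm : L ≤ m + 1) (hmn : m < n) :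
    ¬ detourPath Q x y m <:+: detourPath Q x y n := by
  intro h
  obtain ⟨T, hTn, hT⟩ := List.IsInfix.exists_offset_map_range h
  rcases Nat.eq_zero_or_pos T with rfl | hT0
  · have hy' := hT (m + 2) (by omega)
    simp only [detour, Nat.add_zero, show m + 2 ≤ n + 1 by omega] at hy'
    exact hyQ (by simpa using hy'.symm)
  · have hx' : Q (T - 1) = x := by
      simpa [detour, show T ≠ 0 by omega, show T ≤ n + 1 by omega] using hT 0 (by omega)
    have hshift : Q (T - 1 + L) = Q (L - 1) := by
      simpa [detour, show T - 1 + L = L + T - 1 by omega, show L ≠ 0 by omega, hLm,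
        show L + T ≤ n + 1 by omega] using hT L (by omega)
    exact hxQ (hx' ▸ (hQ (T - 1)).symm.trans hshift)

theorem exists_antichain_of_periodic_walk {E : V → V → Prop} {L b : ℕ} (hL : 0 < L)
    (hQ : Periodic Q L) (hwalk : ∀ i, E (Q i) (Q (i + 1))) (hx : E x (Q 0))
    (hxQ : x ≠ Q (L - 1)) (hy : E (Q b) y) (hyQ : y ≠ Q (b + 1)) :
    ∃ f : ℕ → List V, (∀ k, f k ≠ [] ∧ (f k).IsChain E) ∧
      ∀ j k, j ≠ k → ¬ f j <:+: f k := by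
  refine ⟨fun k => detourPath Q x y (b + (k + 1) * L), fun k => ⟨detourPath_ne_nil, ?_⟩, ?_⟩
  · exact isChain_detourPath hx (fun i _ => hwalk i) (hQ.nat_mul (k + 1) b ▸ hy)
  intro j k hjk hinfix
  rcases Nat.lt_or_gt_of_ne hjk with hlt | hgt
  · refine not_detourPath_infix hL hQ hxQ ?_ ?_ ?_ hinfix
    · rw [add_right_comm]
      exact fun h => hyQ (h.trans (hQ.nat_mul (j + 1) (b + 1)))
    · nlinarith
    · nlinarith
  · have := hinfix.length_le
    simp only [detourPath, List.length_map, List.length_range] at this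
    nlinarith

end Detour

theorem stmt0_general {V : Type*} (E : V → V → Prop) (c : List V)
    (hchain : c.Chain' E) (hlen : 2 ≤ c.length) (hcyc : c.head? = c.getLast?)
    (u w : V) (hu : u ∈ c) (hw : w ∈ c)
    (hin : 1 < Set.ncard {x | E x u}) (hout : 1 < Set.ncard {y | E w y}) :
    ∃ f : ℕ → List V, (∀ k, f k ≠ [] ∧ (f k).Chain' E) ∧
      ∀ j k, j ≠ k → ¬ f j <:+: f k := by
  obtain ⟨L, hL, Q, hQ, hwalk, rfl, b, rfl⟩ :=
    List.IsChain.exists_periodic_walk_through hchain hlen hcyc hu hw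
  obtain ⟨x, hx, hxQ⟩ :=
    (Set.one_lt_ncard_iff_nontrivial_and_finite.mp hin).1.exists_ne (Q (L - 1))
  obtain ⟨y, hy, hyQ⟩ :=
    (Set.one_lt_ncard_iff_nontrivial_and_finite.mp hout).1.exists_ne (Q (b + 1))
  exact exists_antichain_of_periodic_walk hL hQ hwalk hx hxQ hy hyQ

/-- If a finite digraph contains an in-out cycle (a cycle in which some
vertex has in-degree > 1 and some vertex has out-degree > 1), then the set of paths
is not wqo under the subpath (infix) order: there is an infinite antichain of paths. -/
theorem stmt0 {V : Type*} [Fintype V] (E : V → V → Prop) (c : List V)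
    (hchain : c.Chain' E) (hlen : 2 ≤ c.length) (hcyc : c.head? = c.getLast?)
    (u w : V) (hu : u ∈ c) (hw : w ∈ c)
    (hin : 1 < Set.ncard {x | E x u}) (hout : 1 < Set.ncard {y | E w y}) :
    ∃ f : ℕ → List V, (∀ k, f k ≠ [] ∧ (f k).Chain' E) ∧
      ∀ j k, j ≠ k → ¬ f j <:+: f k :=
  stmt0_general E c hchain hlen hcyc u w hu hw hin hout
end

section
/- If a finite digraph G has a path complete decomposition into bicycles, then the set of paths of G contains no infinite antichain under the subpath order. -/
/-- Edges of a path given as a list of vertices. -/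
def pathEdges {V : Type*} (q : List V) : V → V → Prop :=
  fun a b => (a, b) ∈ q.zip q.tail

/-- Edges of a cycle given as a list of vertices (closing edge back to the start). -/
def cycleEdges {V : Type*} (c : List V) : V → V → Prop :=
  fun a b => (a, b) ∈ c.zip (c.rotate 1)

/-- A digraph (given by its edge relation) is a bicycle: two vertex-disjoint simple
cycles connected by a simple path whose internal vertices are disjoint from both
cycles; either or both cycles may be absent, and if neither is absent the connecting
path has length at least one. -/
def IsBicycle {V : Type*} (F : V → V → Prop) : Prop :=
  ∃ c₁ q c₂ : List V,
    q ≠ [] ∧ q.Nodup ∧ c₁.Nodup ∧ c₂.Nodup ∧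
    (∀ v ∈ c₁, v ∉ c₂) ∧
    (∀ v ∈ q.tail.dropLast, v ∉ c₁ ∧ v ∉ c₂) ∧
    (c₁ ≠ [] → ∀ h, q.head? = some h → h ∈ c₁) ∧
    (c₂ ≠ [] → ∀ t, q.getLast? = some t → t ∈ c₂) ∧
    (c₁ ≠ [] → c₂ ≠ [] → 2 ≤ q.length) ∧
    (2 ≤ q.length → ∀ h, q.head? = some h → h ∉ c₂) ∧
    (2 ≤ q.length → ∀ t, q.getLast? = some t → t ∉ c₁) ∧
    F = fun a b => cycleEdges c₁ a b ∨ pathEdges q a b ∨ cycleEdges c₂ a b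


/-!
Every vertex of a bicycle except the first vertex `q₀` of its path has at most one
out-neighbour, and along its first cycle `c₁` predecessors are unique. So a walk in a
bicycle splits into a walk around `c₁`, determined by its last vertex and its length,
followed by a walk that never takes the edge leaving `q₀` along the path, determined by
its first vertex and its length. Given infinitely many walks, each inside one of finitely
many bicycles, pigeonhole on the bicycle and the two junction vertices together with
Dickson's lemma on the two lengths yields two walks, one a subpath of the other.
-/

open List Relator

namespace List
variable {α β : Type*}

theorem Nodup.rightUnique_mem_zip {l₁ : List α} (h : l₁.Nodup) (l₂ : List β) :
    RightUnique fun a b => (a, b) ∈ l₁.zip l₂ := by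
  intro a b b' hb hb'
  obtain ⟨i, hi, hib⟩ := List.mem_iff_getElem.mp hb
  obtain ⟨j, hj, hjb⟩ := List.mem_iff_getElem.mp hb'
  simp only [getElem_zip, Prod.mk.injEq] at hib hjb
  have : i = j := (h.getElem_inj_iff).mp (hib.1.trans hjb.1.symm)
  subst this
  exact hib.2.symm.trans hjb.2

theorem mem_dropLast_of_mem_zip_tail {a b : α} :
    ∀ {l : List α}, (a, b) ∈ l.zip l.tail → a ∈ l.dropLast
  | [], h | [_], h => by simp at h
  | x :: y :: l, h => by
    rw [tail_cons, zip_cons_cons, mem_cons, Prod.mk.injEq] at h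
    rw [dropLast_cons_cons]
    rcases h with ⟨rfl, -⟩ | h
    · exact mem_cons_self
    · exact mem_cons_of_mem _ (mem_dropLast_of_mem_zip_tail h)

theorem IsChain.isPrefix_of_head?_eq {R : α → α → Prop} (hR : RightUnique R) :
    ∀ {l₁ l₂ : List α}, l₁.IsChain R → l₂.IsChain R → l₁.head? = l₂.head? →
      l₁.length ≤ l₂.length → l₁ <+: l₂
  | [], _, _, _, _, _ => nil_prefix
  | _ :: _, [], _, _, h, _ => by simp at h
  | [x], _ :: l, _, _, h, _ => by
    obtain rfl := Option.some.inj h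
    exact ⟨l, rfl⟩
  | _ :: _ :: _, [_], _, _, _, h => by simp at h
  | x :: y :: l, x' :: y' :: l', h₁, h₂, hh, hlen => by
    obtain rfl := Option.some.inj hh
    rw [isChain_cons_cons] at h₁ h₂
    obtain rfl := hR h₁.1 h₂.1
    exact cons_prefix_cons.mpr ⟨rfl, h₁.2.isPrefix_of_head?_eq hR h₂.2 rfl (by simpa using hlen)⟩

theorem IsChain.isSuffix_of_getLast?_eq {R : α → α → Prop} (hR : LeftUnique R)
    {l₁ l₂ : List α} (h₁ : l₁.IsChain R) (h₂ : l₂.IsChain R) (hl : l₁.getLast? = l₂.getLast?)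
    (hlen : l₁.length ≤ l₂.length) : l₁ <:+ l₂ := by
  rw [← reverse_prefix]
  refine IsChain.isPrefix_of_head?_eq hR.flip (isChain_reverse.mpr h₁) (isChain_reverse.mpr h₂) ?_ ?_
  · simpa using hl
  · simpa using hlen

theorem IsChain.exists_eq_append_of_invariant {F P Q : α → α → Prop} (D : α → Prop)
    (hD : ∀ ⦃x y⦄, F x y → D x → D y) (hP : ∀ ⦃x y⦄, F x y → ¬ D y → P x y)
    (hQ : ∀ ⦃x y⦄, F x y → D x → Q x y) {l : List α} (hl : l.IsChain F) :
    ∃ a b, l = a ++ b ∧ a.IsChain P ∧ b.IsChain Q := by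
  classical
  set p : α → Bool := fun x => !decide (D x)
  refine ⟨l.takeWhile p, l.dropWhile p, takeWhile_append_dropWhile.symm, ?_, ?_⟩
  · refine (hl.prefix (takeWhile_prefix p)).imp_of_mem_imp fun x y _ hy hxy => hP hxy ?_
    simpa [p] using mem_takeWhile_imp hy
  · have hb := hl.suffix (dropWhile_suffix p)
    have hmem : ∀ x ∈ l.dropWhile p, D x := hb.induction D _ hD fun hne => by
      simpa [p] using head_dropWhile_not p hne
    exact hb.imp_of_mem_imp fun x _ hx _ hxy => hQ hxy (hmem x hx)

end List

theorem exists_lt_isInfix_append {ι α : Type*} [Finite ι] [Finite α] {P Q : ι → α → α → Prop}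
    (hP : ∀ i, LeftUnique (P i)) (hQ : ∀ i, RightUnique (Q i)) (c : ℕ → ι) (a b : ℕ → List α)
    (ha : ∀ k, (a k).IsChain (P (c k))) (hb : ∀ k, (b k).IsChain (Q (c k))) :
    ∃ m n, m < n ∧ a m ++ b m <:+: a n ++ b n := by
  have hwqo := (wellQuasiOrdered_le (α := ℕ × ℕ)).prod
    (Finite.wellQuasiOrdered (α := ι × Option α × Option α) (· = ·))
  obtain ⟨m, n, hmn, ⟨hla, hlb⟩, hkey⟩ :=
    hwqo fun k => (((a k).length, (b k).length), (c k, (a k).getLast?, (b k).head?))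
  simp only [Prod.mk.injEq] at hkey
  obtain ⟨hc, hlast, hhead⟩ := hkey
  obtain ⟨s, hs⟩ := (ha m).isSuffix_of_getLast?_eq (hP (c m)) (hc ▸ ha n) hlast hla
  obtain ⟨t, ht⟩ := (hb m).isPrefix_of_head?_eq (hQ (c m)) (hc ▸ hb n) hhead hlb
  exact ⟨m, n, hmn, s, t, by rw [← hs, ← ht]; simp only [append_assoc]⟩

theorem Relator.RightUnique.or {α β : Type*} {R S : α → β → Prop} (hR : RightUnique R)
    (hS : RightUnique S) (h : ∀ ⦃a b c⦄, R a b → ¬ S a c) :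
    RightUnique fun a b => R a b ∨ S a b := by
  rintro a b c (hb | hb) (hc | hc)
  exacts [hR hb hc, (h hb hc).elim, (h hc hb).elim, hS hb hc]

def SplitsIntoUniqueChains {α : Type*} (F : α → α → Prop) : Prop :=
  ∃ P Q : α → α → Prop, LeftUnique P ∧ RightUnique Q ∧
    ∀ l : List α, l.IsChain F → ∃ a b, l = a ++ b ∧ a.IsChain P ∧ b.IsChain Q

theorem exists_lt_isInfix_of_splitsIntoUniqueChains {ι α : Type*} [Finite ι] [Finite α]
    {F : ι → α → α → Prop} (hF : ∀ i, SplitsIntoUniqueChains (F i)) (f : ℕ → List α)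
    (hf : ∀ k, ∃ i, (f k).IsChain (F i)) : ∃ m n, m < n ∧ f m <:+: f n := by
  choose P Q hP hQ hsplit using hF
  choose c hc using hf
  choose a b hab ha hb using fun k => hsplit (c k) (f k) (hc k)
  obtain ⟨m, n, hmn, h⟩ := exists_lt_isInfix_append hP hQ c a b ha hb
  exact ⟨m, n, hmn, by rwa [hab m, hab n]⟩

section Bicycle
variable {V : Type*}

theorem cycleEdges_mem {c : List V} {a b : V} (h : cycleEdges c a b) : a ∈ c ∧ b ∈ c :=
  ⟨(of_mem_zip h).1, mem_rotate.mp (of_mem_zip h).2⟩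

theorem rightUnique_cycleEdges {c : List V} (h : c.Nodup) : RightUnique (cycleEdges c) :=
  h.rightUnique_mem_zip _

theorem leftUnique_cycleEdges {c : List V} (h : c.Nodup) : LeftUnique (cycleEdges c) := by
  intro a b x ha hb
  refine ((rotate_perm c 1).nodup_iff.mpr h).rightUnique_mem_zip c (a := x) ?_ ?_
  · rw [← zip_swap]; exact mem_map_of_mem (f := Prod.swap) ha
  · rw [← zip_swap]; exact mem_map_of_mem (f := Prod.swap) hb

theorem rightUnique_pathEdges {q : List V} (h : q.Nodup) : RightUnique (pathEdges q) :=
  h.rightUnique_mem_zip _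

theorem pathEdges_cons {x a b : V} {l : List V} (h : pathEdges (x :: l) a b) :
    pathEdges l a b ∨ a = x ∧ l.head? = some b := by
  cases l with
  | nil => simp [pathEdges] at h
  | cons y l =>
    simp only [pathEdges, tail_cons, zip_cons_cons, mem_cons, Prod.mk.injEq] at h
    simp only [pathEdges, head?_cons, Option.some.injEq]
    tauto

theorem rightUnique_cycleEdges_or_pathEdges_or_cycleEdges {c₁ q c₂ : List V} (h₁ : c₁.Nodup)
    (hq : q.Nodup) (h₂ : c₂.Nodup) (hdisj : ∀ v ∈ c₁, v ∉ c₂)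
    (hint : ∀ v ∈ q.dropLast, v ∉ c₁ ∧ v ∉ c₂) :
    RightUnique fun a b => cycleEdges c₁ a b ∨ pathEdges q a b ∨ cycleEdges c₂ a b := by
  refine (rightUnique_cycleEdges h₁).or ((rightUnique_pathEdges hq).or
    (rightUnique_cycleEdges h₂) ?_) ?_
  · intro a b c hab hac
    exact (hint a (mem_dropLast_of_mem_zip_tail hab)).2 (cycleEdges_mem hac).1
  · rintro a b c hab (hac | hac)
    · exact (hint a (mem_dropLast_of_mem_zip_tail hac)).1 (cycleEdges_mem hab).1
    · exact hdisj a (cycleEdges_mem hab).1 (cycleEdges_mem hac).1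

theorem IsBicycle.splitsIntoUniqueChains {F : V → V → Prop} (h : IsBicycle F) :
    SplitsIntoUniqueChains F := by
  obtain ⟨c₁, q, c₂, hq, hqnd, h₁nd, h₂nd, hdisj, hint, -, -, -, hhead, hlast, rfl⟩ := h
  obtain ⟨q₀, qs, rfl⟩ := exists_cons_of_ne_nil hq
  have hlen (hqs : qs ≠ []) : 2 ≤ (q₀ :: qs).length := by
    simpa [Nat.one_le_iff_ne_zero] using hqs
  have htail₁ : ∀ v ∈ qs, v ∉ c₁ := by
    intro v hv
    by_cases hv' : v = qs.getLast (ne_nil_of_mem hv)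
    · refine hlast (hlen (ne_nil_of_mem hv)) v ?_
      rw [hv', getLast?_cons, getLast?_eq_some_getLast (ne_nil_of_mem hv)]
      simp
    · exact (hint v (mem_dropLast_of_mem_of_ne_getLast hv hv')).1
  -- A walk is cut where it first enters `qs ∪ c₂`; it never leaves that set, and before it
  -- can only run around `c₁`.
  refine ⟨cycleEdges c₁, fun a b => cycleEdges c₁ a b ∨ pathEdges qs a b ∨ cycleEdges c₂ a b,
    leftUnique_cycleEdges h₁nd, rightUnique_cycleEdges_or_pathEdges_or_cycleEdges h₁nd
      (nodup_cons.mp hqnd).2 h₂nd hdisj hint,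
    fun l hl => hl.exists_eq_append_of_invariant (fun v => v ∈ qs ∨ v ∈ c₂) ?_ ?_ ?_⟩
  · rintro x y (hxy | hxy | hxy) hx
    · rcases hx with hx | hx
      · exact absurd (cycleEdges_mem hxy).1 (htail₁ x hx)
      · exact absurd hx (hdisj x (cycleEdges_mem hxy).1)
    · exact Or.inl (of_mem_zip hxy).2
    · exact Or.inr (cycleEdges_mem hxy).2
  · rintro x y (hxy | hxy | hxy) hy
    · exact hxy
    · exact absurd (Or.inl (of_mem_zip hxy).2) hy
    · exact absurd (Or.inr (cycleEdges_mem hxy).2) hy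
  · rintro x y (hxy | hxy | hxy) hx
    · exact Or.inl hxy
    · rcases pathEdges_cons hxy with hxy | ⟨rfl, hy⟩
      · exact Or.inr (Or.inl hxy)
      · rcases hx with hx | hx
        · exact absurd hx (nodup_cons.mp hqnd).1
        · exact absurd hx (hhead (hlen (ne_nil_of_mem (mem_of_mem_head? hy))) x rfl)
    · exact Or.inr (Or.inr hxy)

end Bicycle

theorem stmt1_general {V : Type*} [Fintype V] (E : V → V → Prop)
    (n : ℕ) (F : Fin n → V → V → Prop)
    (hbic : ∀ i, IsBicycle (F i))
    (hdec : ∀ p : List V, p ≠ [] → p.Chain' E → ∃ i, p.Chain' (F i)) :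
    ¬ ∃ f : ℕ → List V, (∀ k, f k ≠ [] ∧ (f k).Chain' E) ∧
        ∀ j k, j ≠ k → ¬ f j <:+: f k := by
  rintro ⟨f, hf, hanti⟩
  obtain ⟨j, k, hjk, hinfix⟩ := exists_lt_isInfix_of_splitsIntoUniqueChains
    (fun i => (hbic i).splitsIntoUniqueChains) f fun k => hdec (f k) (hf k).1 (hf k).2
  exact hanti j k hjk.ne hinfix

/-- If a finite digraph has a path complete decomposition into bicycles,
then its set of paths contains no infinite antichain under the subpath order. -/
theorem stmt1 {V : Type*} [Fintype V] (E : V → V → Prop)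
    (n : ℕ) (F : Fin n → V → V → Prop)
    (hsub : ∀ i a b, F i a b → E a b)
    (hbic : ∀ i, IsBicycle (F i))
    (hdec : ∀ p : List V, p ≠ [] → p.Chain' E → ∃ i, p.Chain' (F i)) :
    ¬ ∃ f : ℕ → List V, (∀ k, f k ≠ [] ∧ (f k).Chain' E) ∧
        ∀ j k, j ≠ k → ¬ f j <:+: f k :=
  stmt1_general E n F hbic hdec
end

section
/- Every permutation on {1,...,n} with at most one consecutive inversion (a 'double ascent') has a nonempty set of associated words over {l, r}: for every double ascent σ there exists a word w ∈ {l,r}⁺ of length n with A(w) = σ, where A is the associated-permutation construction. -/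
/-- The permutation (as the list of values read by position, 0-indexed) associated
with a word over `{l, r}` (encoded `l = true`, `r = false`): the `k`-th letter
determines value `k`, letters `l` forming the first ascending run and letters `r` the
second. -/
def assocPerm (w : List Bool) : List ℕ :=
  ((List.range w.length).filter fun i => w.getD i false) ++
    ((List.range w.length).filter fun i => !(w.getD i false))

/-- The number of consecutive inversions (descents) of a sequence. -/
def descents (s : List ℕ) : ℕ :=
  (s.zip s.tail).countP fun p => decide (p.2 < p.1)

/-!
A double ascent splits after its descent (if any) into two increasing runs `a ++ b`.
Since the entries are distinct, both runs are strictly increasing, so each is the list of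
its own elements in increasing order. The word marking the values of `a` by `l` and those
of `b` by `r` therefore reproduces `a` as its `l`-run and `b` as its `r`-run.
-/

open List

theorem descents_cons_cons (x y : ℕ) (t : List ℕ) :
    descents (x :: y :: t) = descents (y :: t) + if y < x then 1 else 0 := by
  simp [descents, countP_cons]

theorem isChain_le_of_descents_eq_zero : ∀ {s : List ℕ}, descents s = 0 → s.IsChain (· ≤ ·)
  | [], _ => isChain_nil
  | [x], _ => isChain_singleton x
  | x :: y :: t, h => by
    rw [descents_cons_cons, Nat.add_eq_zero_iff, ite_eq_right_iff] at h
    exact isChain_cons_cons.mpr ⟨by simpa using h.2, isChain_le_of_descents_eq_zero h.1⟩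

theorem pairwise_lt_of_descents_eq_zero {s : List ℕ} (h : descents s = 0) (hs : s.Nodup) :
    s.Pairwise (· < ·) :=
  ((isChain_iff_pairwise.mp (isChain_le_of_descents_eq_zero h)).and hs).imp
    fun hle => lt_of_le_of_ne hle.1 hle.2

theorem exists_append_of_descents_le_one :
    ∀ {s : List ℕ}, descents s ≤ 1 → ∃ a b, s = a ++ b ∧ descents a = 0 ∧ descents b = 0
  | [], _ => ⟨[], [], rfl, rfl, rfl⟩
  | [x], _ => ⟨[x], [], rfl, rfl, rfl⟩
  | x :: y :: t, h => by
    rw [descents_cons_cons] at h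
    by_cases hyx : y < x
    · exact ⟨[x], y :: t, rfl, rfl, by simpa [hyx] using h⟩
    · obtain ⟨a, b, hab, ha, hb⟩ :=
        exists_append_of_descents_le_one (s := y :: t) (by simpa [hyx] using h)
      match a, hab with
      | [], hab => exact ⟨[x], b, by rw [hab]; rfl, rfl, hb⟩
      | z :: a', hab =>
        obtain ⟨rfl, rfl⟩ := cons_eq_cons.mp hab
        exact ⟨x :: y :: a', b, rfl, by simp [descents_cons_cons, ha, hyx], hb⟩

theorem assocPerm_map_range (n : ℕ) (p : ℕ → Bool) :
    assocPerm ((range n).map p) = (range n).filter p ++ (range n).filter (fun i => !p i) := by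
  have hgetD : ∀ i ∈ range n, ((range n).map p).getD i false = p i := fun i hi => by
    rw [getD_eq_getElem _ _ (by simpa using hi)]
    simp
  simp only [assocPerm, length_map, length_range]
  congr 1 <;> exact filter_congr fun i hi => by rw [hgetD i hi]

theorem filter_range_eq_of_pairwise_lt {n : ℕ} {p : ℕ → Bool} {c : List ℕ}
    (hc : c.Pairwise (· < ·)) (hmem : ∀ x, x ∈ c ↔ x < n ∧ p x) :
    (range n).filter p = c :=
  (pairwise_lt_range.filter p).eq_of_mem_iff hc fun x => by simp [hmem]

theorem stmt15_general (n : ℕ) (σ : List ℕ)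
    (hperm : σ.Perm (List.range n)) (hda : descents σ ≤ 1) :
    ∃ w : List Bool, w.length = n ∧ assocPerm w = σ := by
  obtain ⟨a, b, rfl, ha, hb⟩ := exists_append_of_descents_le_one hda
  obtain ⟨hnda, hndb, hdisj⟩ := nodup_append.mp (hperm.nodup_iff.mpr nodup_range)
  have hmem : ∀ x, x ∈ a ∨ x ∈ b ↔ x < n := by simp [← mem_append, hperm.mem_iff]
  have hba : ∀ x ∈ b, x ∉ a := fun x hxb hxa => hdisj x hxa x hxb rfl
  refine ⟨(range n).map (· ∈ a), by simp, ?_⟩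
  rw [assocPerm_map_range]
  congr 1
  · exact filter_range_eq_of_pairwise_lt (pairwise_lt_of_descents_eq_zero ha hnda) fun x => by
      simpa [← hmem] using fun h => Or.inl h
  · exact filter_range_eq_of_pairwise_lt (pairwise_lt_of_descents_eq_zero hb hndb) fun x => by
      simp only [← hmem, Bool.not_eq_true', decide_eq_false_iff_not]
      exact ⟨fun h => ⟨Or.inr h, hba x h⟩, fun ⟨h, hxa⟩ => h.resolve_left hxa⟩

/-- Every double ascent (permutation of `{0, …, n-1}` with at most one
consecutive inversion) has a nonempty set of associated words: it is `assocPerm w`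
for some word `w` over `{l, r}` of length `n`. -/
theorem stmt15 (n : ℕ) (hn : 1 ≤ n) (σ : List ℕ)
    (hperm : σ.Perm (List.range n)) (hda : descents σ ≤ 1) :
    ∃ w : List Bool, w.length = n ∧ assocPerm w = σ :=
  stmt15_general n σ hperm hda
end

section
/- A double ascent σ of length n is a single ascent (the identity/increasing permutation) if and only if its set of associated words over {l, r} equals {l^a r^c : a + c = n, a, c ≥ 0}. In particular, a double ascent σ has more than one associated word if and only if σ is a single ascent. -/
/-!
A word `w` is read off as `assocPerm w = L ++ R`, where `L` and `R` are the increasing lists of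
positions of `l`s and of `r`s. Since `L` is the prefix of length `|L|`, the permutation together
with the number of `l`s determines the word. If two words with `k₁ < k₂` letters `l` give the
same `σ`, then the first `k₂` entries of `σ` increase (the `L` of the second word) and so do the
entries from position `k₁` on (the `R` of the first word); these windows overlap, so `σ` is
increasing, i.e. the single ascent. Conversely `lᵃ rᶜ` produces the single ascent, and by the
same determination these are its only words.
-/

namespace List

theorem pairwise_of_pairwise_take_of_pairwise_drop {α : Type*} {R : α → α → Prop} [IsTrans α R]
    {l : List α} {i j : ℕ} (hij : i < j) (htake : (l.take j).Pairwise R)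
    (hdrop : (l.drop i).Pairwise R) : l.Pairwise R := by
  rw [pairwise_iff_getElem] at htake hdrop ⊢
  have of_take : ∀ a b (ha : a < l.length) (hb : b < l.length), a < b → b < j → R l[a] l[b] :=
    fun a b ha hb hab hbj => by
      have := htake a b (by simp; omega) (by simp; omega) hab
      rwa [getElem_take, getElem_take] at this
  have of_drop : ∀ a b (ha : a < l.length) (hb : b < l.length), a < b → i ≤ a → R l[a] l[b] :=
    fun a b ha hb hab hia => by
      obtain ⟨a, rfl⟩ := Nat.exists_eq_add_of_le hia
      obtain ⟨b, rfl⟩ := Nat.exists_eq_add_of_le (hia.trans hab.le)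
      have := hdrop a b (by simp; omega) (by simp; omega) (by omega)
      rwa [getElem_drop, getElem_drop] at this
  intro a b ha hb hab
  by_cases hbj : b < j
  · exact of_take a b ha hb hab hbj
  by_cases hia : i ≤ a
  · exact of_drop a b ha hb hab hia
  -- the two windows overlap at position `i`
  have hi : i < l.length := by omega
  exact _root_.trans (of_take a i ha hi (by omega) hij) (of_drop i b hi hb (by omega) le_rfl)

theorem eq_range_of_perm_of_pairwise_lt {l : List ℕ} {n : ℕ} (hperm : l.Perm (range n))
    (hl : l.Pairwise (· < ·)) : l = range n :=
  hperm.eq_of_pairwise' hl pairwise_lt_range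

end List

open List

def lPositions (w : List Bool) : List ℕ := (range w.length).filter fun i => w.getD i false

def rPositions (w : List Bool) : List ℕ := (range w.length).filter fun i => !(w.getD i false)

section Positions

variable (w : List Bool)

theorem assocPerm_eq_lPositions_append_rPositions :
    assocPerm w = lPositions w ++ rPositions w := rfl

theorem assocPerm_perm_range : (assocPerm w).Perm (range w.length) :=
  filter_append_perm _ _

theorem length_assocPerm : (assocPerm w).length = w.length := by
  simpa using (assocPerm_perm_range w).length_eq

theorem pairwise_lt_lPositions : (lPositions w).Pairwise (· < ·) := pairwise_lt_range.filter _

theorem pairwise_lt_rPositions : (rPositions w).Pairwise (· < ·) := pairwise_lt_range.filter _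

theorem take_assocPerm : (assocPerm w).take (lPositions w).length = lPositions w := take_left

theorem drop_assocPerm : (assocPerm w).drop (lPositions w).length = rPositions w := drop_left

theorem mem_lPositions_iff {i : ℕ} (hi : i < w.length) : i ∈ lPositions w ↔ w[i] = true := by
  simp [lPositions, hi]

end Positions

theorem eq_of_assocPerm_eq_of_length_lPositions_eq {w₁ w₂ : List Bool}
    (h : assocPerm w₁ = assocPerm w₂) (hl : (lPositions w₁).length = (lPositions w₂).length) :
    w₁ = w₂ := by
  have hlen : w₁.length = w₂.length := by rw [← length_assocPerm, h, length_assocPerm]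
  have hpos : lPositions w₁ = lPositions w₂ := by rw [← take_assocPerm, h, hl, take_assocPerm]
  refine ext_getElem hlen fun i h₁ h₂ => Bool.eq_iff_iff.2 ?_
  rw [← mem_lPositions_iff w₁ h₁, ← mem_lPositions_iff w₂ h₂, hpos]

theorem pairwise_lt_assocPerm_of_length_lPositions_lt {w₁ w₂ : List Bool}
    (h : assocPerm w₁ = assocPerm w₂) (hl : (lPositions w₁).length < (lPositions w₂).length) :
    (assocPerm w₁).Pairwise (· < ·) := by
  refine pairwise_of_pairwise_take_of_pairwise_drop hl ?_ ?_
  · rw [h, take_assocPerm]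
    exact pairwise_lt_lPositions w₂
  · rw [drop_assocPerm]
    exact pairwise_lt_rPositions w₁

theorem assocPerm_eq_range_of_ne {w₁ w₂ : List Bool} (h : assocPerm w₁ = assocPerm w₂)
    (hne : w₁ ≠ w₂) : assocPerm w₁ = range w₁.length := by
  refine eq_range_of_perm_of_pairwise_lt (assocPerm_perm_range w₁) ?_
  rcases lt_trichotomy (lPositions w₁).length (lPositions w₂).length with hl | hl | hl
  · exact pairwise_lt_assocPerm_of_length_lPositions_lt h hl
  · exact absurd (eq_of_assocPerm_eq_of_length_lPositions_eq h hl) hne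
  · exact h ▸ pairwise_lt_assocPerm_of_length_lPositions_lt h.symm hl

section SingleAscentWords

variable (a c : ℕ)

theorem getD_replicate_append_replicate {i : ℕ} :
    (replicate a true ++ replicate c false).getD i false = decide (i < a) := by
  by_cases hia : i < a
  · rw [getD_append _ _ _ i (by rwa [length_replicate]), getD_replicate _ hia, decide_eq_true hia]
  · rw [getD_append_right _ _ _ i (by rw [length_replicate]; omega), decide_eq_false hia,
      getD_eq_getElem?_getD, getElem?_replicate]
    split <;> rfl

theorem lPositions_replicate_append_replicate :
    lPositions (replicate a true ++ replicate c false) = range a := by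
  rw [lPositions, length_append, length_replicate, length_replicate, range_add, filter_append,
    filter_map, filter_eq_self.2, filter_eq_nil_iff.2, map_nil, append_nil]
  all_goals
    intro x hx
    simp only [getD_replicate_append_replicate, mem_range] at hx ⊢
    simp [hx]

theorem rPositions_replicate_append_replicate :
    rPositions (replicate a true ++ replicate c false) = (range c).map (a + ·) := by
  rw [rPositions, length_append, length_replicate, length_replicate, range_add, filter_append,
    filter_map, filter_eq_nil_iff.2, filter_eq_self.2, nil_append]
  all_goals
    intro x hx
    simp only [getD_replicate_append_replicate, mem_range] at hx ⊢
    simp [hx]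

theorem assocPerm_replicate_append_replicate :
    assocPerm (replicate a true ++ replicate c false) = range (a + c) := by
  rw [assocPerm_eq_lPositions_append_rPositions, lPositions_replicate_append_replicate,
    rPositions_replicate_append_replicate, range_add]

end SingleAscentWords

theorem assocPerm_eq_range_iff {w : List Bool} {n : ℕ} :
    assocPerm w = range n ↔ ∃ a c, a + c = n ∧ w = replicate a true ++ replicate c false := by
  constructor
  · intro hw
    have hlen : w.length = n := by simpa [hw] using (length_assocPerm w).symm
    have hk : (lPositions w).length ≤ n := hlen ▸ (length_filter_le _ _).trans_eq length_range
    refine ⟨_, n - (lPositions w).length, Nat.add_sub_cancel' hk, ?_⟩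
    refine eq_of_assocPerm_eq_of_length_lPositions_eq ?_ ?_
    · rw [hw, assocPerm_replicate_append_replicate, Nat.add_sub_cancel' hk]
    · simp [lPositions_replicate_append_replicate]
  · rintro ⟨a, c, rfl, rfl⟩
    exact assocPerm_replicate_append_replicate a c

theorem stmt16_general (n : ℕ) (hn : 1 ≤ n) (σ : List ℕ)
    (hperm : σ.Perm (List.range n)) :
    ((σ = List.range n) ↔
      {w : List Bool | w ≠ [] ∧ assocPerm w = σ} =
        {w : List Bool | ∃ a c : ℕ, a + c = n ∧
          w = List.replicate a true ++ List.replicate c false}) ∧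
    ((∃ w₁ w₂ : List Bool, w₁ ≠ w₂ ∧ (w₁ ≠ [] ∧ assocPerm w₁ = σ) ∧
        (w₂ ≠ [] ∧ assocPerm w₂ = σ)) ↔ σ = List.range n) := by
  set lrWords : Set (List Bool) :=
    {w | ∃ a c, a + c = n ∧ w = replicate a true ++ replicate c false}
  have range_words : {w : List Bool | w ≠ [] ∧ assocPerm w = range n} = lrWords := by
    ext w
    refine ⟨fun hw => assocPerm_eq_range_iff.1 hw.2, fun hw => ?_⟩
    have hw := assocPerm_eq_range_iff.2 hw
    refine ⟨ne_nil_of_length_pos ?_, hw⟩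
    rwa [← length_assocPerm, hw, length_range]
  have all_l : replicate n true ∈ lrWords := ⟨n, 0, rfl, (append_nil _).symm⟩
  have all_r : replicate n false ∈ lrWords := ⟨0, n, zero_add n, (nil_append _).symm⟩
  refine ⟨⟨fun hσ => hσ ▸ range_words, fun hwords => ?_⟩, ⟨?_, fun hσ => ?_⟩⟩
  · obtain ⟨-, hσ⟩ := hwords ▸ all_l
    rw [← hσ]
    exact (range_words ▸ all_l).2
  · rintro ⟨w₁, w₂, hne, ⟨-, h₁⟩, ⟨-, h₂⟩⟩
    have hlen : w₁.length = n := by rw [← length_assocPerm, h₁, hperm.length_eq, length_range]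
    rw [← h₁, ← hlen]
    exact assocPerm_eq_range_of_ne (h₁.trans h₂.symm) hne
  · subst hσ
    refine ⟨_, _, ?_, range_words ▸ all_l, range_words ▸ all_r⟩
    obtain ⟨m, rfl⟩ := Nat.exists_eq_add_of_le' hn
    simp [replicate_succ]

/-- A double ascent `σ` of length `n ≥ 1` is the single (increasing)
ascent iff its set of associated words is `{lᵃ rᶜ : a + c = n}`; equivalently, `σ`
has more than one associated word iff `σ` is the single ascent. -/
theorem stmt16 (n : ℕ) (hn : 1 ≤ n) (σ : List ℕ)
    (hperm : σ.Perm (List.range n)) (hda : descents σ ≤ 1) :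
    ((σ = List.range n) ↔
      {w : List Bool | w ≠ [] ∧ assocPerm w = σ} =
        {w : List Bool | ∃ a c : ℕ, a + c = n ∧
          w = List.replicate a true ++ List.replicate c false}) ∧
    ((∃ w₁ w₂ : List Bool, w₁ ≠ w₂ ∧ (w₁ ≠ [] ∧ assocPerm w₁ = σ) ∧
        (w₂ ≠ [] ∧ assocPerm w₂ = σ)) ↔ σ = List.range n) :=
  stmt16_general n hn σ hperm
end

section
/- Double ascents are not a valid structure type: the double ascent 13245 restricted to its top three values is order-isomorphic to the bottom three values of the double ascent 12453 (both isomorphic to 123), but the unique permutation on 7 points combining them on this overlap of 3 points is 1324675, which contains two consecutive inversions and hence is not a double ascent. -/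
/-- A double ascent: a sequence of distinct values with at most one consecutive
inversion. -/
def IsDoubleAscent (s : List ℕ) : Prop := s.Nodup ∧ descents s ≤ 1

/-- Two sequences are order-isomorphic (same length, same relative order of values
position by position). -/
def OrdIso (s t : List ℕ) : Prop :=
  s.length = t.length ∧ ∀ i j, i < s.length → j < s.length →
    (s.getD i 0 < s.getD j 0 ↔ t.getD i 0 < t.getD j 0)

theorem ordIso_iff {s t : List ℕ} : OrdIso s t ↔ s.length = t.length ∧
    ∀ i < s.length, ∀ j < s.length, (s.getD i 0 < s.getD j 0 ↔ t.getD i 0 < t.getD j 0) := by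
  simp only [OrdIso]
  grind

instance : DecidableRel OrdIso := fun _ _ => decidable_of_iff _ ordIso_iff.symm

instance : DecidablePred IsDoubleAscent := fun _ => inferInstanceAs (Decidable (_ ∧ _))

namespace List

theorem insertIdx_idxOf_erase {α : Type*} [DecidableEq α] {l : List α} {a : α} (ha : a ∈ l) :
    (l.erase a).insertIdx (l.idxOf a) a = l := by
  have h := idxOf_lt_length_iff.2 ha
  rw [erase_eq_eraseIdx_of_idxOf rfl]
  conv_rhs => rw [← insertIdx_eraseIdx_getElem h]
  rw [getElem_idxOf h]

variable {l : List ℕ} {n : ℕ}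

theorem Perm.filter_lt_perm_range (h : l ~ range (n + 1)) : l.filter (· < n) ~ range n := by
  have hrange : (range n).filter (· < n) = range n := filter_eq_self.2 fun v hv => by simpa using hv
  simpa [range_succ, filter_append, hrange] using h.filter (· < n)

theorem Perm.erase_eq_filter_lt (h : l ~ range (n + 1)) : l.erase n = l.filter (· < n) := by
  rw [(h.nodup_iff.2 nodup_range).erase_eq_filter]
  refine filter_congr fun v hv => ?_
  have := mem_range.1 (h.subset hv)
  rw [Bool.eq_iff_iff, bne_iff_ne, decide_eq_true_iff]
  omega

theorem Perm.idxOf_lt (h : l ~ range (n + 1)) : l.idxOf n < n + 1 := by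
  simpa [h.length_eq] using idxOf_lt_length_iff.2 (h.mem_iff.2 (mem_range.2 n.lt_succ_self))

theorem Perm.insertIdx_idxOf_filter_lt (h : l ~ range (n + 1)) :
    (l.filter (· < n)).insertIdx (l.idxOf n) n = l := by
  rw [← h.erase_eq_filter_lt]
  exact insertIdx_idxOf_erase (h.mem_iff.2 (mem_range.2 n.lt_succ_self))

end List

theorem insertIdx_insertIdx_eq_of_ordIso : ∀ i < 7, ∀ j < 6,
    OrdIso (((([0, 2, 1, 3, 4] : List ℕ).insertIdx j 5).insertIdx i 6).filter
      (fun v => decide (2 ≤ v))) [0, 1, 3, 4, 2] →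
    (([0, 2, 1, 3, 4] : List ℕ).insertIdx j 5).insertIdx i 6 = [0, 2, 1, 3, 5, 6, 4] := by
  decide

/-- Double ascents are not a valid structure type: `13245` (0-indexed
`[0,2,1,3,4]`) and `12453` (0-indexed `[0,1,3,4,2]`) are double ascents; the top three
values of the former are order-isomorphic to the bottom three values of the latter;
the unique permutation on 7 points combining them on this overlap of 3 values is
`1324675` (0-indexed `[0,2,1,3,5,6,4]`), which is not a double ascent. -/
theorem stmt17 :
    IsDoubleAscent [0, 2, 1, 3, 4] ∧
    IsDoubleAscent [0, 1, 3, 4, 2] ∧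
    OrdIso (List.filter (fun v => decide (2 ≤ v)) [0, 2, 1, 3, 4])
      (List.filter (fun v => decide (v < 3)) [0, 1, 3, 4, 2]) ∧
    (∀ θ : List ℕ, θ.Perm (List.range 7) →
      θ.filter (fun v => decide (v < 5)) = [0, 2, 1, 3, 4] →
      OrdIso (θ.filter (fun v => decide (2 ≤ v))) [0, 1, 3, 4, 2] →
      θ = [0, 2, 1, 3, 5, 6, 4]) ∧
    ¬ IsDoubleAscent [0, 2, 1, 3, 5, 6, 4] := by
  refine ⟨by decide, by decide, by decide, fun θ hθ hbottom htop => ?_, by decide⟩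
  have hθ₆ : (θ.filter (· < 6)).Perm (List.range 6) := hθ.filter_lt_perm_range
  have hbottom₆ : (θ.filter (· < 6)).filter (· < 5) = [0, 2, 1, 3, 4] := by
    rw [List.filter_filter, ← hbottom]
    exact List.filter_congr fun v _ => by grind
  have hθ_eq : θ = (([0, 2, 1, 3, 4] : List ℕ).insertIdx ((θ.filter (· < 6)).idxOf 5) 5).insertIdx
      (θ.idxOf 6) 6 := by
    rw [← hbottom₆, hθ₆.insertIdx_idxOf_filter_lt, hθ.insertIdx_idxOf_filter_lt]
  rw [hθ_eq] at htop ⊢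
  exact insertIdx_insertIdx_eq_of_ordIso _ hθ.idxOf_lt _ hθ₆.idxOf_lt htop
end
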